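/- With A, C, S, R, γ as in the CSR construction (λ(A) = 1, C a completely reducible subgraph of the critical graph of A with cyclicity γ, B = (A^γ)*, C and R extracted from columns/rows of B indexed by the critical nodes, S the restriction of A to the critical edges), define P^(t) := C ⊗ S^t ⊗ R. Then P^(t+γ) = P^(t) for all t ≥ 0, i.e., the sequence of CSR products is periodic with period γ from the very beginning. -/

import Mathlib

/-!
Because `λ(A) = 1`, every closed walk has weight at most `1`: a long closed walk splits at a
repeated vertex into shorter closed walks. Hence the powers of `A` are bounded, `B = (A^γ)*` is
finite and `B ⊗ A^γ ≤ B`. A nonzero entry of `S^γ` ends in `N_c` and is dominated by the entry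
of `A^γ`, so `C ⊗ S^γ ≤ C` and `P^(t+γ) ≤ P^(t)`.

Conversely, every edge of the subgraph `G` is critical, so the rest of its critical cycle
completes it to a closed walk of weight `1`. Composing these completions along a closed walk of
`G`, and using again that closed walks weigh at most `1`, every closed walk of `G` has weight at
least `1`. This gives a common `m ≥ 1` with `(S^(mγ))_kk ≥ 1` for all `k ∈ N_c`, so `C ≤ C ⊗ S^(mγ)`
and `P^(t) ≤ P^(mγ+t) ≤ P^(t+γ)`.
-/

open scoped NNReal Classical

namespace MaxAlg

/-- Max-times matrix product over `ℝ≥0`. -/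
noncomputable def mmul {n : ℕ} (A B : Fin n → Fin n → ℝ≥0) : Fin n → Fin n → ℝ≥0 :=
  fun i j => Finset.univ.sup fun k => A i k * B k j

/-- Max-algebraic powers of a matrix, with `mpow A 0` the identity. -/
noncomputable def mpow {n : ℕ} (A : Fin n → Fin n → ℝ≥0) : ℕ → (Fin n → Fin n → ℝ≥0)
  | 0 => fun i j => if i = j then 1 else 0
  | (k+1) => mmul A (mpow A k)

/-- Weight of a walk `p` of length `k` (product of the edge weights). -/
noncomputable def pathWeight {n : ℕ} (A : Fin n → Fin n → ℝ≥0) (k : ℕ)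
    (p : Fin (k+1) → Fin n) : ℝ≥0 :=
  ∏ t : Fin k, A (p t.castSucc) (p t.succ)

/-- `p` is a walk in the edge relation `E`. -/
def IsEPath {n : ℕ} (E : Fin n → Fin n → Prop) (k : ℕ) (p : Fin (k+1) → Fin n) : Prop :=
  ∀ t : Fin k, E (p t.castSucc) (p t.succ)

/-- `j` is reachable from `i` in `E` (possibly by the empty path). -/
def Reach {n : ℕ} (E : Fin n → Fin n → Prop) (i j : Fin n) : Prop :=
  ∃ k, ∃ p : Fin (k+1) → Fin n, IsEPath E k p ∧ p 0 = i ∧ p (Fin.last k) = j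

/-- Edge relation of the digraph associated with a nonnegative matrix. -/
def edges {n : ℕ} (A : Fin n → Fin n → ℝ≥0) (i j : Fin n) : Prop := A i j ≠ 0

/-- Lengths of (positive-length) closed walks through `i` in `E`. -/
def cycLen {n : ℕ} (E : Fin n → Fin n → Prop) (i : Fin n) : Set ℕ :=
  {k | 0 < k ∧ ∃ p : Fin (k+1) → Fin n, IsEPath E k p ∧ p 0 = i ∧ p (Fin.last k) = i}

/-- Lengths of all closed walks in `E`. -/
def allCycLen {n : ℕ} (E : Fin n → Fin n → Prop) : Set ℕ :=
  {k | ∃ i, k ∈ cycLen E i}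

/-- The gcd of a set of naturals, characterized by the gcd property. -/
noncomputable def setGcd (S : Set ℕ) : ℕ :=
  sInf {d | (∀ s ∈ S, d ∣ s) ∧ ∀ e : ℕ, (∀ s ∈ S, e ∣ s) → e ∣ d}

/-- Cyclicity of a (completely reducible) digraph: lcm over the nodes of the
gcd of the cycle lengths through that node. -/
noncomputable def graphCyc {n : ℕ} (E : Fin n → Fin n → Prop) : ℕ :=
  Finset.univ.lcm fun i => if (cycLen E i).Nonempty then setGcd (cycLen E i) else 1

/-- The maximum cycle geometric mean `λ(A)`. -/
noncomputable def mcgm {n : ℕ} (A : Fin n → Fin n → ℝ≥0) : ℝ≥0 :=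
  sSup {x | ∃ k : ℕ, 0 < k ∧ k ≤ n ∧ ∃ p : Fin (k+1) → Fin n,
    p 0 = p (Fin.last k) ∧ x = pathWeight A k p ^ ((1 : ℝ) / (k : ℝ))}

/-- The Kleene star `A* = I ⊕ A ⊕ A² ⊕ ⋯` (entrywise supremum of all powers). -/
noncomputable def kleeneStar {n : ℕ} (A : Fin n → Fin n → ℝ≥0) : Fin n → Fin n → ℝ≥0 :=
  fun i j => ⨆ k : ℕ, mpow A k i j

/-- `(i,j)` is a critical edge: it lies on a cycle attaining `λ(A)`. -/
def IsCriticalEdge {n : ℕ} (A : Fin n → Fin n → ℝ≥0) (i j : Fin n) : Prop :=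
  ∃ k : ℕ, 0 < k ∧ k ≤ n ∧ ∃ p : Fin (k+1) → Fin n, p 0 = p (Fin.last k) ∧
    pathWeight A k p ^ ((1 : ℝ) / (k : ℝ)) = mcgm A ∧
    ∃ t : Fin k, p t.castSucc = i ∧ p t.succ = j

/-- A node lying on a critical cycle of `A`. -/
def IsCriticalNode {n : ℕ} (A : Fin n → Fin n → ℝ≥0) (i : Fin n) : Prop :=
  (∃ j, IsCriticalEdge A i j) ∨ (∃ j, IsCriticalEdge A j i)

/-- A completely reducible subgraph of the critical graph of `A`:
every edge is critical, and every edge can be completed to a cycle of the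
subgraph (so each weakly connected part is strongly connected). -/
structure CritSubgraph {n : ℕ} (A : Fin n → Fin n → ℝ≥0) where
  E : Fin n → Fin n → Prop
  critical : ∀ i j, E i j → IsCriticalEdge A i j
  reducible : ∀ i j, E i j → ∃ k, ∃ p : Fin (k+1) → Fin n,
    IsEPath E k p ∧ p 0 = j ∧ p (Fin.last k) = i

/-- Node set `N_c` of the subgraph. -/
def CritSubgraph.Nc {n : ℕ} {A : Fin n → Fin n → ℝ≥0} (G : CritSubgraph A) (i : Fin n) : Prop :=
  (∃ j, G.E i j) ∨ (∃ j, G.E j i)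

/-- The matrix `C`: columns of `(A^γ)*` with indices in `N_c`, other columns zero. -/
noncomputable def Cmat {n : ℕ} (A : Fin n → Fin n → ℝ≥0) (G : CritSubgraph A) :
    Fin n → Fin n → ℝ≥0 :=
  fun i j => if G.Nc j then kleeneStar (mpow A (graphCyc G.E)) i j else 0

/-- The matrix `R`: rows of `(A^γ)*` with indices in `N_c`, other rows zero. -/
noncomputable def Rmat {n : ℕ} (A : Fin n → Fin n → ℝ≥0) (G : CritSubgraph A) :
    Fin n → Fin n → ℝ≥0 :=
  fun i j => if G.Nc i then kleeneStar (mpow A (graphCyc G.E)) i j else 0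

/-- The matrix `S`: the restriction of `A` to the edges of the subgraph. -/
noncomputable def Smat {n : ℕ} (A : Fin n → Fin n → ℝ≥0) (G : CritSubgraph A) :
    Fin n → Fin n → ℝ≥0 :=
  fun i j => if G.E i j then A i j else 0

/-- The CSR product `P^(t) = C ⊗ S^t ⊗ R`. -/
noncomputable def csr {n : ℕ} (A : Fin n → Fin n → ℝ≥0) (G : CritSubgraph A) (t : ℕ) :
    Fin n → Fin n → ℝ≥0 :=
  mmul (mmul (Cmat A G) (mpow (Smat A G) t)) (Rmat A G)

/-- The strongly connected component (as a node set) of `i` in `E`. -/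
def scc {n : ℕ} (E : Fin n → Fin n → Prop) (i : Fin n) : Set (Fin n) :=
  {j | Reach E i j ∧ Reach E j i}

/-- The principal submatrix of `A` on the strongly connected component of `i`
in `D(A)` (other entries zero). -/
noncomputable def compMat {n : ℕ} (A : Fin n → Fin n → ℝ≥0) (i : Fin n) :
    Fin n → Fin n → ℝ≥0 :=
  fun a b => if a ∈ scc (edges A) i ∧ b ∈ scc (edges A) i then A a b else 0

/-- `λ(i)`: the m.c.g.m. of the component of `D(A)` containing `i`. -/
noncomputable def lamNode {n : ℕ} (A : Fin n → Fin n → ℝ≥0) (i : Fin n) : ℝ≥0 :=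
  mcgm (compMat A i)

/-- `i` belongs to a nontrivial component of `D(A)` (it lies on a cycle). -/
def Nontrivial' {n : ℕ} (A : Fin n → Fin n → ℝ≥0) (i : Fin n) : Prop :=
  (cycLen (edges A) i).Nonempty

/-- `γ`: the lcm of the cyclicities of the critical graphs of the nontrivial
components of `D(A)`. -/
noncomputable def gammaU {n : ℕ} (A : Fin n → Fin n → ℝ≥0) : ℕ :=
  Finset.univ.lcm fun i =>
    if Nontrivial' A i then graphCyc (IsCriticalEdge (compMat A i)) else 1

/-- Max-times matrix-vector product. -/
noncomputable def mvec {n : ℕ} (M : Fin n → Fin n → ℝ≥0) (y : Fin n → ℝ≥0) :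
    Fin n → ℝ≥0 :=
  fun a => Finset.univ.sup fun k => M a k * y k

/-- `i` strongly accesses `j`: paths of every sufficiently large length exist. -/
def StrongAccess {n : ℕ} (E : Fin n → Fin n → Prop) (i j : Fin n) : Prop :=
  ∃ T, ∀ t ≥ T, ∃ p : Fin (t+1) → Fin n, IsEPath E t p ∧ p 0 = i ∧ p (Fin.last t) = j

local infixl:70 " ⊗ " => mmul

section Semiring

variable {n : ℕ}

lemma le_mmul (A B : Fin n → Fin n → ℝ≥0) (i k j : Fin n) : A i k * B k j ≤ (A ⊗ B) i j :=
  Finset.le_sup (f := fun k => A i k * B k j) (Finset.mem_univ k)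

lemma mmul_le_mmul {A A' B B' : Fin n → Fin n → ℝ≥0} (hA : A ≤ A') (hB : B ≤ B') :
    A ⊗ B ≤ A' ⊗ B' := fun i j =>
  Finset.sup_mono_fun fun k _ => mul_le_mul' (hA i k) (hB k j)

lemma mmul_assoc (A B C : Fin n → Fin n → ℝ≥0) : A ⊗ B ⊗ C = A ⊗ (B ⊗ C) := by
  funext i j
  simp only [mmul, NNReal.finset_sup_mul, NNReal.mul_finset_sup, mul_assoc]
  exact Finset.sup_comm _ _ _

lemma mpow_zero_mmul (A B : Fin n → Fin n → ℝ≥0) : mpow A 0 ⊗ B = B := by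
  funext i j
  refine le_antisymm (Finset.sup_le fun k _ => ?_) ?_
  · by_cases h : i = k <;> simp [mpow, h]
  · simpa [mpow] using le_mmul (mpow A 0) B i i j

lemma mpow_add (A : Fin n → Fin n → ℝ≥0) (a b : ℕ) :
    mpow A (a + b) = mpow A a ⊗ mpow A b := by
  induction a with
  | zero => rw [Nat.zero_add, mpow_zero_mmul]
  | succ a ih => rw [Nat.succ_add, mpow, ih, mpow, mmul_assoc]

lemma mpow_one (A : Fin n → Fin n → ℝ≥0) : mpow A 1 = A := by
  funext i j
  change (A ⊗ mpow A 0) i j = A i j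
  refine le_antisymm (Finset.sup_le fun k _ => ?_) ?_
  · by_cases h : k = j <;> simp [mpow, h]
  · simpa [mpow] using le_mmul A (mpow A 0) i j j

lemma mpow_succ (A : Fin n → Fin n → ℝ≥0) (k : ℕ) : mpow A (k + 1) = mpow A k ⊗ A := by
  rw [mpow_add, mpow_one]

lemma mpow_mul (A : Fin n → Fin n → ℝ≥0) (a b : ℕ) : mpow (mpow A a) b = mpow A (a * b) := by
  induction b with
  | zero => rfl
  | succ b ih => rw [mpow, ih, Nat.mul_succ, Nat.add_comm, mpow_add]

lemma le_mpow_add (A : Fin n → Fin n → ℝ≥0) (a b : ℕ) (i k j : Fin n) :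
    mpow A a i k * mpow A b k j ≤ mpow A (a + b) i j := by
  rw [mpow_add]
  exact le_mmul _ _ i k j

lemma mpow_mono {A B : Fin n → Fin n → ℝ≥0} (h : A ≤ B) (t : ℕ) : mpow A t ≤ mpow B t := by
  induction t with
  | zero => exact le_rfl
  | succ t ih => exact mmul_le_mmul h ih

lemma one_le_mpow_mul_of_one_le {A : Fin n → Fin n → ℝ≥0} {c : ℕ} {k : Fin n}
    (h : 1 ≤ mpow A c k k) (e : ℕ) : 1 ≤ mpow A (c * e) k k := by
  induction e with
  | zero => simp [mpow]
  | succ e ih => exact (one_le_mul ih h).trans (le_mpow_add A (c * e) c k k k)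

lemma kleeneStar_mul_le {B : Fin n → Fin n → ℝ≥0}
    (hB : ∀ i j, BddAbove (Set.range fun m => mpow B m i j)) (i k j : Fin n) :
    kleeneStar B i k * B k j ≤ kleeneStar B i j :=
  NNReal.iSup_mul_le fun m =>
    calc mpow B m i k * B k j = mpow B m i k * mpow B 1 k j := by rw [mpow_one]
      _ ≤ mpow B (m + 1) i j := le_mpow_add B _ _ _ _ _
      _ ≤ kleeneStar B i j := le_ciSup (hB i j) (m + 1)

end Semiring

section Walks

variable {n : ℕ}

def walkWeight (A : Fin n → Fin n → ℝ≥0) (p : ℕ → Fin n) (a b : ℕ) : ℝ≥0 :=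
  ∏ s ∈ Finset.Ico a b, A (p s) (p (s + 1))

lemma walkWeight_mul_walkWeight (A : Fin n → Fin n → ℝ≥0) (p : ℕ → Fin n) {a b c : ℕ}
    (hab : a ≤ b) (hbc : b ≤ c) : walkWeight A p a b * walkWeight A p b c = walkWeight A p a c :=
  Finset.prod_Ico_consecutive _ hab hbc

lemma walkWeight_le_mpow (A : Fin n → Fin n → ℝ≥0) (p : ℕ → Fin n) {a b : ℕ} (hab : a ≤ b) :
    walkWeight A p a b ≤ mpow A (b - a) (p a) (p b) := by
  obtain ⟨d, rfl⟩ := Nat.exists_eq_add_of_le hab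
  rw [Nat.add_sub_cancel_left]
  clear hab
  induction d generalizing a with
  | zero => simp [walkWeight, mpow]
  | succ d ih =>
    rw [walkWeight, Finset.prod_eq_prod_Ico_succ_bot (by omega), ← walkWeight,
      show a + (d + 1) = a + 1 + d by omega]
    exact (mul_le_mul_right (ih (a := a + 1)) _).trans (le_mmul A (mpow A d) _ _ _)

lemma exists_walkWeight_eq_mpow (A : Fin n → Fin n → ℝ≥0) (k : ℕ) {i j : Fin n}
    (h : mpow A k i j ≠ 0) :
    ∃ p : ℕ → Fin n, p 0 = i ∧ p k = j ∧ walkWeight A p 0 k = mpow A k i j := by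
  induction k generalizing j with
  | zero =>
    have hij : i = j := by by_contra hij; simp [mpow, hij] at h
    exact ⟨fun _ => i, rfl, hij, by simp [walkWeight, mpow, hij]⟩
  | succ k ih =>
    obtain ⟨l, -, hl⟩ := Finset.exists_mem_eq_sup Finset.univ ⟨j, Finset.mem_univ j⟩
      fun l => mpow A k i l * A l j
    rw [mpow_succ] at h ⊢
    change (mmul (mpow A k) A) i j = _ at hl
    rw [hl] at h ⊢
    obtain ⟨p, hp0, hpk, hpw⟩ := ih (left_ne_zero_of_mul h)
    refine ⟨Function.update p (k + 1) j, by simp [hp0], by simp, ?_⟩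
    rw [walkWeight, Finset.prod_Ico_succ_top (Nat.zero_le k), ← hpw, walkWeight]
    congr 1
    · exact Finset.prod_congr rfl fun s hs => by
        have := (Finset.mem_Ico.1 hs).2
        rw [Function.update_of_ne (by omega), Function.update_of_ne (by omega)]
    · simp [hpk]

lemma pathWeight_eq_walkWeight (A : Fin n → Fin n → ℝ≥0) (p : ℕ → Fin n) (k : ℕ) :
    pathWeight A k (fun s : Fin (k + 1) => p s) = walkWeight A p 0 k := by
  rw [pathWeight, walkWeight, ← Finset.range_eq_Ico, ← Fin.prod_univ_eq_prod_range]
  simp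

/- A walk of length `t > n` visits some vertex twice among its first `n + 1` positions;
cutting out the closed subwalk between the two visits leaves a walk of length `t - c`. -/
lemma exists_mpow_le_mpow_sub_mul_mpow_self (A : Fin n → Fin n → ℝ≥0) {t : ℕ} (ht : n < t)
    (i j : Fin n) :
    ∃ c x, 0 < c ∧ c ≤ n ∧ mpow A t i j ≤ mpow A (t - c) i j * mpow A c x x := by
  by_cases h0 : mpow A t i j = 0
  · exact ⟨1, i, one_pos, i.pos, by simp [h0]⟩
  obtain ⟨p, rfl, rfl, hp⟩ := exists_walkWeight_eq_mpow A t h0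
  have cut : ∀ a b : ℕ, a < b → b ≤ n → p a = p b →
      ∃ c x, 0 < c ∧ c ≤ n ∧
        mpow A t (p 0) (p t) ≤ mpow A (t - c) (p 0) (p t) * mpow A c x x := by
    intro a b hab hbn hpab
    refine ⟨b - a, p a, by omega, by omega, ?_⟩
    rw [← hp, ← walkWeight_mul_walkWeight A p (Nat.zero_le a) (show a ≤ t by omega),
      ← walkWeight_mul_walkWeight A p hab.le (show b ≤ t by omega),
      show t - (b - a) = a - 0 + (t - b) by omega]
    calc walkWeight A p 0 a * (walkWeight A p a b * walkWeight A p b t)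
        = walkWeight A p 0 a * walkWeight A p b t * walkWeight A p a b := by ring
      _ ≤ mpow A (a - 0) (p 0) (p a) * mpow A (t - b) (p b) (p t) *
          mpow A (b - a) (p a) (p b) := by
        gcongr
        · exact walkWeight_le_mpow A p (Nat.zero_le a)
        · exact walkWeight_le_mpow A p (show b ≤ t by omega)
        · exact walkWeight_le_mpow A p hab.le
      _ ≤ _ := by
        rw [← hpab]
        gcongr
        exact le_mpow_add A _ _ _ _ _
  obtain ⟨a, b, hne, hab⟩ :=
    Fintype.exists_ne_map_eq_of_card_lt (fun s : Fin (n + 1) => p s) (by simp)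
  rcases lt_or_gt_of_ne (Fin.val_ne_of_ne hne) with h | h
  · exact cut a b h (by omega) hab
  · exact cut b a h (by omega) hab.symm

lemma bddAbove_mcgm_set (A : Fin n → Fin n → ℝ≥0) :
    BddAbove {x | ∃ k : ℕ, 0 < k ∧ k ≤ n ∧ ∃ p : Fin (k+1) → Fin n,
      p 0 = p (Fin.last k) ∧ x = pathWeight A k p ^ ((1 : ℝ) / (k : ℝ))} := by
  refine (((Set.finite_Iic n).biUnion fun k _ => Set.finite_range
    fun p : Fin (k + 1) → Fin n => pathWeight A k p ^ ((1 : ℝ) / (k : ℝ))).bddAbove).mono ?_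
  rintro x ⟨k, -, hk, p, -, rfl⟩
  exact Set.mem_biUnion (x := k) hk ⟨p, rfl⟩

end Walks

section CycleMean

variable {n : ℕ} {A : Fin n → Fin n → ℝ≥0}

lemma mpow_self_le_one_of_short (hA : ∀ c ≤ n, ∀ x, mpow A c x x ≤ 1) (t : ℕ) (i : Fin n) :
    mpow A t i i ≤ 1 := by
  induction t using Nat.strong_induction_on with
  | _ t ih =>
    rcases le_or_gt t n with htn | htn
    · exact hA t htn i
    · obtain ⟨c, x, hc, hcn, hle⟩ := exists_mpow_le_mpow_sub_mul_mpow_self A htn i i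
      exact hle.trans (mul_le_one' (ih _ (by omega)) (hA c hcn x))

lemma mpow_le_sup_of_short (hA : ∀ c ≤ n, ∀ x, mpow A c x x ≤ 1) (t : ℕ) (i j : Fin n) :
    mpow A t i j ≤ (Finset.range (n + 1)).sup fun s => mpow A s i j := by
  induction t using Nat.strong_induction_on with
  | _ t ih =>
    rcases le_or_gt t n with htn | htn
    · exact Finset.le_sup (f := fun s => mpow A s i j) (by simpa [Nat.lt_succ_iff] using htn)
    · obtain ⟨c, x, hc, hcn, hle⟩ := exists_mpow_le_mpow_sub_mul_mpow_self A htn i j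
      exact hle.trans ((mul_le_mul' (ih _ (by omega)) (hA c hcn x)).trans_eq (mul_one _))

lemma mpow_self_le_one_of_mcgm_le_one (h1 : mcgm A ≤ 1) (t : ℕ) (i : Fin n) :
    mpow A t i i ≤ 1 := by
  refine mpow_self_le_one_of_short (fun c hcn x => ?_) t i
  rcases Nat.eq_zero_or_pos c with rfl | hc
  · simp [mpow]
  by_cases h0 : mpow A c x x = 0
  · simp [h0]
  obtain ⟨p, hp0, hpc, hpw⟩ := exists_walkWeight_eq_mpow A c h0
  have hmean : walkWeight A p 0 c ^ ((1 : ℝ) / (c : ℝ)) ≤ 1 := by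
    rw [← pathWeight_eq_walkWeight]
    exact (le_csSup (bddAbove_mcgm_set A) ⟨c, hc, hcn, _, by simp [hp0, hpc], rfl⟩).trans h1
  rw [← hpw]
  exact (NNReal.rpow_le_rpow_iff (one_div_pos.2 (Nat.cast_pos.2 hc))).1 (by rwa [NNReal.one_rpow])

lemma bddAbove_range_mpow_of_mcgm_le_one (h1 : mcgm A ≤ 1) (i j : Fin n) :
    BddAbove (Set.range fun t => mpow A t i j) :=
  ⟨_, Set.forall_mem_range.2 fun t =>
    mpow_le_sup_of_short (fun c _ => mpow_self_le_one_of_mcgm_le_one h1 c) t i j⟩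

/- The critical cycle through `(u, v)` has weight `1`; the rest of the cycle is the
walk back from `v` to `u`. -/
lemma IsCriticalEdge.exists_one_le_mul_mpow (h1 : mcgm A = 1) {u v : Fin n}
    (h : IsCriticalEdge A u v) : ∃ m, 1 ≤ A u v * mpow A m v u := by
  obtain ⟨k, hk, -, p, hcl, hw, t, rfl, rfl⟩ := h
  let q : ℕ → Fin n := fun s => p (Fin.ofNat (k + 1) s)
  have hq : (fun s : Fin (k + 1) => q s) = p := funext fun s => by simp [q]
  have hqw : walkWeight A q 0 k = 1 := by
    rw [← pathWeight_eq_walkWeight, hq]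
    rw [h1, one_div] at hw
    simpa [hw] using (NNReal.rpow_inv_natCast_pow (pathWeight A k p) hk.ne').symm
  have hqt : q t = p t.castSucc := congrArg p (Fin.ext (by simp))
  have hqt' : q (t + 1) = p t.succ := congrArg p (Fin.ext (by simp))
  have hqk : q k = q 0 := by simp [q, hcl]
  refine ⟨k - (t + 1) + t, ?_⟩
  rw [← hqt, ← hqt']
  calc 1 = walkWeight A q 0 t * (walkWeight A q t (t + 1) * walkWeight A q (t + 1) k) := by
        rw [walkWeight_mul_walkWeight A q (Nat.le_succ _) (by omega),
          walkWeight_mul_walkWeight A q (Nat.zero_le _) (by omega), hqw]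
    _ ≤ mpow A (t - 0) (q 0) (q t) *
        (A (q t) (q (t + 1)) * mpow A (k - (t + 1)) (q (t + 1)) (q k)) := by
        gcongr
        · exact walkWeight_le_mpow A q (Nat.zero_le _)
        · simp [walkWeight]
        · exact walkWeight_le_mpow A q (by omega)
    _ = A (q t) (q (t + 1)) * (mpow A (k - (t + 1)) (q (t + 1)) (q 0) * mpow A t (q 0) (q t)) := by
        rw [hqk, Nat.sub_zero]; ring
    _ ≤ A (q t) (q (t + 1)) * mpow A (k - (t + 1) + t) (q (t + 1)) (q t) := by
        gcongr; exact le_mpow_add A _ _ _ _ _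

end CycleMean

section Return

variable {n : ℕ} {S A : Fin n → Fin n → ℝ≥0}

def HasReturn (S A : Fin n → Fin n → ℝ≥0) (s : ℕ) (u v : Fin n) : Prop :=
  ∃ m, 1 ≤ mpow S s u v * mpow A m v u

lemma HasReturn.trans {s s' : ℕ} {u v w : Fin n} (h : HasReturn S A s u v)
    (h' : HasReturn S A s' v w) : HasReturn S A (s + s') u w := by
  obtain ⟨m, hm⟩ := h
  obtain ⟨m', hm'⟩ := h'
  refine ⟨m' + m, ?_⟩
  calc 1 ≤ mpow S s u v * mpow A m v u * (mpow S s' v w * mpow A m' w v) := one_le_mul hm hm'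
    _ = mpow S s u v * mpow S s' v w * (mpow A m' w v * mpow A m v u) := by ring
    _ ≤ mpow S (s + s') u w * mpow A (m' + m) w u :=
      mul_le_mul' (le_mpow_add S _ _ _ _ _) (le_mpow_add A _ _ _ _ _)

lemma hasReturn_of_isEPath {E : Fin n → Fin n → Prop} (hE : ∀ u v, E u v → HasReturn S A 1 u v)
    {k : ℕ} {p : Fin (k + 1) → Fin n} (hp : IsEPath E k p) :
    HasReturn S A k (p 0) (p (Fin.last k)) := by
  induction k with
  | zero => exact ⟨0, by simp [mpow]⟩
  | succ k ih =>
    have h := (hE _ _ (hp 0)).trans (ih (p := p ∘ Fin.succ) fun t => hp t.succ)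
    simpa [Nat.add_comm 1 k] using h

lemma HasReturn.one_le {s : ℕ} {u : Fin n} (h : HasReturn S A s u u)
    (hA : ∀ m, mpow A m u u ≤ 1) : 1 ≤ mpow S s u u := by
  obtain ⟨m, hm⟩ := h
  exact hm.trans (mul_le_of_le_one_right' (hA m))

end Return

section CSR

variable {n : ℕ} {A : Fin n → Fin n → ℝ≥0} (G : CritSubgraph A)

lemma Smat_le : Smat A G ≤ A := fun i j => by
  unfold Smat
  split_ifs <;> simp

lemma Cmat_le_kleeneStar (i j : Fin n) :
    Cmat A G i j ≤ kleeneStar (mpow A (graphCyc G.E)) i j := by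
  unfold Cmat
  split_ifs <;> simp

lemma CritSubgraph.hasReturn_of_edge (h1 : mcgm A = 1) {u v : Fin n} (h : G.E u v) :
    HasReturn (Smat A G) A 1 u v := by
  obtain ⟨m, hm⟩ := (G.critical u v h).exists_one_le_mul_mpow h1
  exact ⟨m, by simpa [mpow_one, Smat, h] using hm⟩

lemma CritSubgraph.exists_hasReturn_self (h1 : mcgm A = 1) {k : Fin n} (hk : G.Nc k) :
    ∃ c, 0 < c ∧ HasReturn (Smat A G) A c k k := by
  have hpath {r : ℕ} {p : Fin (r + 1) → Fin n} (hp : IsEPath G.E r p) :=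
    hasReturn_of_isEPath (fun _ _ => G.hasReturn_of_edge h1) hp
  rcases hk with ⟨j, hkj⟩ | ⟨j, hjk⟩
  · obtain ⟨r, p, hp, hp0, hpr⟩ := G.reducible k j hkj
    have hback := hpath hp
    rw [hp0, hpr] at hback
    exact ⟨1 + r, by omega, (G.hasReturn_of_edge h1 hkj).trans hback⟩
  · obtain ⟨r, p, hp, hp0, hpr⟩ := G.reducible j k hjk
    have hforth := hpath hp
    rw [hp0, hpr] at hforth
    exact ⟨r + 1, by omega, hforth.trans (G.hasReturn_of_edge h1 hjk)⟩

lemma CritSubgraph.Nc_of_mpow_Smat_ne_zero {s : ℕ} (hs : 0 < s) {k k' : Fin n}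
    (h : mpow (Smat A G) s k k' ≠ 0) : G.Nc k' := by
  obtain ⟨s, rfl⟩ := Nat.exists_eq_succ_of_ne_zero hs.ne'
  obtain ⟨j, -, hj⟩ := Finset.exists_mem_eq_sup Finset.univ ⟨k, Finset.mem_univ k⟩
    fun j => mpow (Smat A G) s k j * Smat A G j k'
  rw [mpow_succ] at h
  change Finset.univ.sup _ = _ at hj
  refine Or.inr ⟨j, by_contra fun hE => h ?_⟩
  change Finset.univ.sup _ = _
  rw [hj]
  simp [Smat, hE]

lemma Cmat_mmul_mpow_le (hA : ∀ i j, BddAbove (Set.range fun t => mpow A t i j))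
    (hγ : 0 < graphCyc G.E) : Cmat A G ⊗ mpow (Smat A G) (graphCyc G.E) ≤ Cmat A G := by
  have hB : ∀ i j, BddAbove (Set.range fun m => mpow (mpow A (graphCyc G.E)) m i j) :=
    fun i j => (hA i j).mono (Set.range_subset_iff.2 fun m => by
      rw [mpow_mul]
      exact Set.mem_range_self _)
  intro i k'
  refine Finset.sup_le fun k _ => ?_
  by_cases hS : mpow (Smat A G) (graphCyc G.E) k k' = 0
  · simp [hS]
  calc Cmat A G i k * mpow (Smat A G) (graphCyc G.E) k k'
      ≤ kleeneStar (mpow A (graphCyc G.E)) i k * mpow A (graphCyc G.E) k k' :=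
        mul_le_mul' (Cmat_le_kleeneStar G i k) (mpow_mono (Smat_le G) _ k k')
    _ ≤ kleeneStar (mpow A (graphCyc G.E)) i k' := kleeneStar_mul_le hB i k k'
    _ = Cmat A G i k' := by simp [Cmat, G.Nc_of_mpow_Smat_ne_zero hγ hS]

lemma le_Cmat_mmul_mpow {s : ℕ} (hs : ∀ k, G.Nc k → 1 ≤ mpow (Smat A G) s k k) :
    Cmat A G ≤ Cmat A G ⊗ mpow (Smat A G) s := by
  intro i k
  by_cases hk : G.Nc k
  · calc Cmat A G i k ≤ Cmat A G i k * mpow (Smat A G) s k k := le_mul_of_one_le_right' (hs k hk)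
      _ ≤ _ := le_mmul _ _ i k k
  · simp [Cmat, hk]

lemma CritSubgraph.exists_one_le_mpow_Smat_self (h1 : mcgm A = 1) (d : ℕ) :
    ∃ m, 0 < m ∧ ∀ k, G.Nc k → 1 ≤ mpow (Smat A G) (m * d) k k := by
  have hc : ∀ k, ∃ c, 0 < c ∧ (G.Nc k → 1 ≤ mpow (Smat A G) c k k) := by
    intro k
    by_cases hk : G.Nc k
    · obtain ⟨c, hc, hret⟩ := G.exists_hasReturn_self h1 hk
      exact ⟨c, hc, fun _ => hret.one_le (mpow_self_le_one_of_mcgm_le_one h1.le · k)⟩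
    · exact ⟨1, one_pos, hk.elim⟩
  choose c hc0 hc using hc
  refine ⟨∏ k, c k, Finset.prod_pos fun k _ => hc0 k, fun k hk => ?_⟩
  obtain ⟨e, he⟩ := Finset.dvd_prod_of_mem c (Finset.mem_univ k)
  rw [he, mul_assoc]
  exact one_le_mpow_mul_of_one_le (hc k hk) _

lemma csr_add_le (hA : ∀ i j, BddAbove (Set.range fun t => mpow A t i j))
    (hγ : 0 < graphCyc G.E) (t : ℕ) : csr A G (t + graphCyc G.E) ≤ csr A G t := by
  rw [csr, csr, Nat.add_comm, mpow_add, ← mmul_assoc]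
  exact mmul_le_mmul (mmul_le_mmul (Cmat_mmul_mpow_le G hA hγ) le_rfl) le_rfl

lemma csr_le_csr_add {s : ℕ} (hs : ∀ k, G.Nc k → 1 ≤ mpow (Smat A G) s k k) (t : ℕ) :
    csr A G t ≤ csr A G (s + t) := by
  rw [csr, csr, mpow_add, ← mmul_assoc]
  exact mmul_le_mmul (mmul_le_mmul (le_Cmat_mmul_mpow G hs) le_rfl) le_rfl

end CSR

/-- the CSR products `P^(t) = C ⊗ S^t ⊗ R` are periodic with
period `γ` from the very beginning: `P^(t+γ) = P^(t)` for all `t ≥ 0`. -/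
theorem csr_periodic {n : ℕ} (A : Fin n → Fin n → ℝ≥0) (h1 : mcgm A = 1)
    (G : CritSubgraph A) :
    ∀ t : ℕ, csr A G (t + graphCyc G.E) = csr A G t := by
  intro t
  rcases Nat.eq_zero_or_pos (graphCyc G.E) with h0 | hγ
  · rw [h0, Nat.add_zero]
  have hA := bddAbove_range_mpow_of_mcgm_le_one h1.le
  have hanti : Antitone fun j => csr A G (t + graphCyc G.E * j) :=
    antitone_nat_of_succ_le fun j => by
      rw [Nat.mul_succ, ← Nat.add_assoc]
      exact csr_add_le G hA hγ _
  obtain ⟨m, hm, hdiag⟩ := G.exists_one_le_mpow_Smat_self h1 (graphCyc G.E)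
  refine le_antisymm (csr_add_le G hA hγ t) ?_
  calc csr A G t ≤ csr A G (m * graphCyc G.E + t) := csr_le_csr_add G hdiag t
    _ = csr A G (t + graphCyc G.E * m) := by rw [Nat.add_comm, Nat.mul_comm]
    _ ≤ csr A G (t + graphCyc G.E * 1) := hanti hm
    _ = csr A G (t + graphCyc G.E) := by rw [Nat.mul_one]

end MaxAlg
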